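/- Directed-information data processing inequality: under the system factorization where (i) D_t is drawn independently of all past variables and X, (ii) U_t is conditionally independent of Xᵗ given (Aᵗ, Dᵗ, Uᵗ⁻¹), and (iii) X_t is conditionally independent of (Aᵗ⁻¹, Dᵗ⁻¹) given (Xᵗ⁻¹, Uᵗ⁻¹), it holds that I(X^T → A^T ‖ D^T, U₊^{T−1}) ≥ I(X^T → U^T), where I(a^{T} → b^{T} ‖ c^{T}) = Σ_{t=0}^{T} I(aᵗ ; b_t | bᵗ⁻¹, cᵗ) is causally conditioned directed information and I(X^T → U^T) = Σ_{t=0}^{T} I(Xᵗ ; U_t | Uᵗ⁻¹). -/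
import Mathlib


open scoped Classical
open Finset

noncomputable def prob {Ω : Type} [Fintype Ω] (p : Ω → ℝ) (E : Ω → Prop) : ℝ :=
  ∑ ω, if E ω then p ω else 0

noncomputable def plog (q : ℝ) : ℝ := if q = 0 then 0 else -q * Real.logb 2 q

/-- Shannon entropy (in bits) of a random variable `X` on a finite space with pmf `p`. -/
noncomputable def entropy {Ω α : Type} [Fintype Ω] (p : Ω → ℝ) (X : Ω → α) : ℝ :=
  ∑ x ∈ Finset.univ.image X, plog (prob p (fun ω => X ω = x))

/-- Conditional entropy `H(A|Z) = H(A,Z) - H(Z)` (in bits). -/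
noncomputable def condEntropy {Ω α β : Type} [Fintype Ω] (p : Ω → ℝ) (A : Ω → α) (Z : Ω → β) : ℝ :=
  entropy p (fun ω => (A ω, Z ω)) - entropy p Z

/-- Mutual information `I(X;Y)` (in bits). -/
noncomputable def mutualInfo {Ω α β : Type} [Fintype Ω] (p : Ω → ℝ) (X : Ω → α) (Y : Ω → β) : ℝ :=
  entropy p X + entropy p Y - entropy p (fun ω => (X ω, Y ω))

/-- Conditional mutual information `I(X;Y|Z) = H(X|Z) - H(X|Y,Z)` (in bits). -/
noncomputable def condMutualInfo {Ω α β γ : Type} [Fintype Ω] (p : Ω → ℝ)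
    (X : Ω → α) (Y : Ω → β) (Z : Ω → γ) : ℝ :=
  condEntropy p X Z - condEntropy p X (fun ω => (Y ω, Z ω))

/-- Expected codeword length `E[ℓ(A)]`. -/
noncomputable def expLen {Ω : Type} [Fintype Ω] (p : Ω → ℝ) (A : Ω → List Bool) : ℝ :=
  ∑ ω, p ω * (A ω).length

/-- θ(x) = x + (1+x)·log₂(1+x) − x·log₂(x); note `Real.logb 2 0 = 0`, so θ(0) = 0. -/
noncomputable def theta (x : ℝ) : ℝ :=
  x + (1 + x) * Real.logb 2 (1 + x) - x * Real.logb 2 x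

/-- The inverse of θ on `[0,∞)`. -/
noncomputable def thetaInv : ℝ → ℝ := Function.invFunOn theta (Set.Ici 0)

/-- History `(X_0, …, X_{t-1})` of a discrete-time process. -/
def hist {Ω α : Type} (X : ℕ → Ω → α) (t : ℕ) (ω : Ω) : Fin t → α := fun i => X i ω

section ProbLemmas
variable {Ω : Type} [Fintype Ω] {α β γ : Type}

lemma prob_nonneg (p : Ω → ℝ) (hp : ∀ ω, 0 ≤ p ω) (E : Ω → Prop) : 0 ≤ prob p E := by
  unfold prob
  apply Finset.sum_nonneg
  intro ω _
  split <;> simp [hp ω]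

lemma prob_congr (p : Ω → ℝ) {E F : Ω → Prop} (h : ∀ ω, E ω ↔ F ω) :
    prob p E = prob p F := by
  unfold prob
  exact Finset.sum_congr rfl fun ω _ => if_congr (h ω) rfl rfl

lemma prob_mono (p : Ω → ℝ) (hp : ∀ ω, 0 ≤ p ω) {E F : Ω → Prop}
    (h : ∀ ω, E ω → F ω) : prob p E ≤ prob p F := by
  unfold prob
  apply Finset.sum_le_sum
  intro ω _
  by_cases hE : E ω
  · simp [hE, h ω hE]
  · simp only [hE, if_false]
    split <;> simp [hp ω]

lemma prob_true (p : Ω → ℝ) (hsum : ∑ ω, p ω = 1) : prob p (fun _ => True) = 1 := by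
  simpa [prob] using hsum

lemma prob_of_not (p : Ω → ℝ) {E : Ω → Prop} (h : ∀ ω, ¬ E ω) : prob p E = 0 := by
  unfold prob
  exact Finset.sum_eq_zero fun ω _ => by simp [h ω]

lemma prob_marg (p : Ω → ℝ) (E : Ω → Prop) (Y : Ω → β) :
    ∑ y ∈ Finset.univ.image Y, prob p (fun ω => E ω ∧ Y ω = y) = prob p E := by
  unfold prob
  rw [Finset.sum_comm]
  refine Finset.sum_congr rfl fun ω _ => ?_
  by_cases hE : E ω
  · simp only [hE, true_and]
    rw [Finset.sum_ite_eq (Finset.univ.image Y) (Y ω) (fun _ => p ω)]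
    simp
  · simp [hE]

lemma plog_eq (q : ℝ) : plog q = -q * Real.logb 2 q := by
  unfold plog
  split
  · simp [*]
  · rfl

lemma entropy_eq_sum_subset (p : Ω → ℝ) (X : Ω → α) (S : Finset α)
    (h : ∀ ω, X ω ∈ S) :
    entropy p X = ∑ x ∈ S, plog (prob p (fun ω => X ω = x)) := by
  unfold entropy
  refine Finset.sum_subset (fun x hx => ?_) (fun x _ hx => ?_)
  · obtain ⟨ω, -, rfl⟩ := Finset.mem_image.mp hx
    exact h ω
  · have : prob p (fun ω => X ω = x) = 0 :=
      prob_of_not p fun ω hω => hx (Finset.mem_image.mpr ⟨ω, Finset.mem_univ ω, hω⟩)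
    simp [this, plog]

lemma entropy_partition (p : Ω → ℝ) (X : Ω → α) (Y : Ω → β)
    (h : ∀ ω ω', X ω = X ω' ↔ Y ω = Y ω') : entropy p X = entropy p Y := by
  unfold entropy
  refine Finset.sum_bij'
    (i := fun x hx => Y (Finset.mem_image.mp hx).choose)
    (j := fun y hy => X (Finset.mem_image.mp hy).choose)
    (fun x hx => ?_) (fun y hy => ?_) (fun x hx => ?_) (fun y hy => ?_) (fun x hx => ?_)
  · exact Finset.mem_image.mpr ⟨_, Finset.mem_univ _, rfl⟩
  · exact Finset.mem_image.mpr ⟨_, Finset.mem_univ _, rfl⟩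
  · -- j (i x hx) = x
    set ω₀ := (Finset.mem_image.mp hx).choose with hω₀
    have hspec : X ω₀ = x := (Finset.mem_image.mp hx).choose_spec.2
    set ω₁ := (Finset.mem_image.mp (Finset.mem_image.mpr ⟨ω₀, Finset.mem_univ _, rfl⟩ :
      Y ω₀ ∈ Finset.univ.image Y)).choose with hω₁
    have hspec1 : Y ω₁ = Y ω₀ := (Finset.mem_image.mp (Finset.mem_image.mpr
      ⟨ω₀, Finset.mem_univ _, rfl⟩ : Y ω₀ ∈ Finset.univ.image Y)).choose_spec.2
    calc X ω₁ = X ω₀ := (h ω₁ ω₀).mpr hspec1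
    _ = x := hspec
  · set ω₀ := (Finset.mem_image.mp hy).choose with hω₀
    have hspec : Y ω₀ = y := (Finset.mem_image.mp hy).choose_spec.2
    set ω₁ := (Finset.mem_image.mp (Finset.mem_image.mpr ⟨ω₀, Finset.mem_univ _, rfl⟩ :
      X ω₀ ∈ Finset.univ.image X)).choose with hω₁
    have hspec1 : X ω₁ = X ω₀ := (Finset.mem_image.mp (Finset.mem_image.mpr
      ⟨ω₀, Finset.mem_univ _, rfl⟩ : X ω₀ ∈ Finset.univ.image X)).choose_spec.2
    calc Y ω₁ = Y ω₀ := (h ω₁ ω₀).mp hspec1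
    _ = y := hspec
  · have hspec : X (Finset.mem_image.mp hx).choose = x :=
      (Finset.mem_image.mp hx).choose_spec.2
    show plog (prob p fun ω => X ω = x) =
      plog (prob p fun ω => Y ω = Y (Finset.mem_image.mp hx).choose)
    congr 1
    refine prob_congr p fun ω => ?_
    constructor
    · intro he
      exact (h ω _).mp (he.trans hspec.symm)
    · intro he
      exact ((h ω _).mpr he).trans hspec

lemma entropy_const (p : Ω → ℝ) (hsum : ∑ ω, p ω = 1) (W : Ω → α)
    (h : ∀ ω ω', W ω = W ω') : entropy p W = 0 := by
  have hne : Nonempty Ω := by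
    by_contra hc
    rw [not_nonempty_iff] at hc
    rw [Finset.sum_of_isEmpty] at hsum
    norm_num at hsum
  obtain ⟨ω₀⟩ := hne
  have himg : Finset.univ.image W = {W ω₀} := by
    apply Finset.Subset.antisymm
    · intro w hw
      obtain ⟨ω, _, rfl⟩ := Finset.mem_image.mp hw
      simp [h ω ω₀]
    · intro w hw
      simp only [Finset.mem_singleton] at hw
      exact Finset.mem_image.mpr ⟨ω₀, Finset.mem_univ _, hw.symm⟩
  unfold entropy
  rw [himg, Finset.sum_singleton]
  have : prob p (fun ω => W ω = W ω₀) = 1 := by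
    rw [prob_congr p (F := fun _ => True) (fun ω => by simp [h ω ω₀])]
    exact prob_true p hsum
  simp [this, plog]

end ProbLemmas


section CMI
variable {Ω : Type} [Fintype Ω] {α β γ : Type}

/-- joint pmf of three variables -/
noncomputable def jq {Ω : Type} [Fintype Ω] (p : Ω → ℝ) (X : Ω → α) (Y : Ω → β) (Z : Ω → γ)
    (x : α) (y : β) (z : γ) : ℝ :=
  prob p (fun ω => X ω = x ∧ Y ω = y ∧ Z ω = z)

lemma entropy_pair_eq (p : Ω → ℝ) (W1 : Ω → α) (W2 : Ω → γ) :
    entropy p (fun ω => (W1 ω, W2 ω)) =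
      ∑ x ∈ Finset.univ.image W1, ∑ z ∈ Finset.univ.image W2,
        plog (prob p (fun ω => W1 ω = x ∧ W2 ω = z)) := by
  rw [entropy_eq_sum_subset p _ ((Finset.univ.image W1) ×ˢ (Finset.univ.image W2))
    (fun ω => Finset.mem_product.mpr ⟨Finset.mem_image.mpr ⟨ω, Finset.mem_univ _, rfl⟩,
          Finset.mem_image.mpr ⟨ω, Finset.mem_univ _, rfl⟩⟩)]
  rw [Finset.sum_product]
  refine Finset.sum_congr rfl fun x _ => Finset.sum_congr rfl fun z _ => ?_
  congr 1
  exact prob_congr p fun ω => by simp [Prod.ext_iff]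

lemma entropy_triple_eq (p : Ω → ℝ) (X : Ω → α) (Y : Ω → β) (Z : Ω → γ) :
    entropy p (fun ω => (X ω, (Y ω, Z ω))) =
      ∑ x ∈ Finset.univ.image X, ∑ y ∈ Finset.univ.image Y, ∑ z ∈ Finset.univ.image Z,
        plog (jq p X Y Z x y z) := by
  rw [entropy_eq_sum_subset p _
      ((Finset.univ.image X) ×ˢ ((Finset.univ.image Y) ×ˢ (Finset.univ.image Z)))
    (fun ω => Finset.mem_product.mpr ⟨Finset.mem_image.mpr ⟨ω, Finset.mem_univ _, rfl⟩,
          Finset.mem_product.mpr ⟨Finset.mem_image.mpr ⟨ω, Finset.mem_univ _, rfl⟩,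
          Finset.mem_image.mpr ⟨ω, Finset.mem_univ _, rfl⟩⟩⟩)]
  rw [Finset.sum_product]
  refine Finset.sum_congr rfl fun x _ => ?_
  rw [Finset.sum_product]
  refine Finset.sum_congr rfl fun y _ => Finset.sum_congr rfl fun z _ => ?_
  congr 1
  exact prob_congr p fun ω => by simp [Prod.ext_iff, and_assoc]

variable (p : Ω → ℝ) (X : Ω → α) (Y : Ω → β) (Z : Ω → γ)

lemma marg_xz (x : α) (z : γ) :
    prob p (fun ω => X ω = x ∧ Z ω = z) = ∑ y ∈ Finset.univ.image Y, jq p X Y Z x y z := by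
  rw [← prob_marg p (fun ω => X ω = x ∧ Z ω = z) Y]
  exact Finset.sum_congr rfl fun y _ => prob_congr p fun ω => by tauto

lemma marg_yz (y : β) (z : γ) :
    prob p (fun ω => Y ω = y ∧ Z ω = z) = ∑ x ∈ Finset.univ.image X, jq p X Y Z x y z := by
  rw [← prob_marg p (fun ω => Y ω = y ∧ Z ω = z) X]
  exact Finset.sum_congr rfl fun x _ => prob_congr p fun ω => by tauto

lemma marg_z (z : γ) :
    prob p (fun ω => Z ω = z) =
      ∑ x ∈ Finset.univ.image X, ∑ y ∈ Finset.univ.image Y, jq p X Y Z x y z := by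
  rw [← prob_marg p (fun ω => Z ω = z) X]
  refine Finset.sum_congr rfl fun x _ => ?_
  rw [← prob_marg p (fun ω => Z ω = z ∧ X ω = x) Y]
  exact Finset.sum_congr rfl fun y _ => prob_congr p fun ω => by tauto

lemma cmi_repr :
    condMutualInfo p X Y Z =
      ∑ x ∈ Finset.univ.image X, ∑ y ∈ Finset.univ.image Y, ∑ z ∈ Finset.univ.image Z,
        jq p X Y Z x y z *
          (Real.logb 2 (jq p X Y Z x y z) +
           Real.logb 2 (prob p (fun ω => Z ω = z)) -
           Real.logb 2 (prob p (fun ω => X ω = x ∧ Z ω = z)) -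
           Real.logb 2 (prob p (fun ω => Y ω = y ∧ Z ω = z))) := by
  have hXZ : entropy p (fun ω => (X ω, Z ω)) =
      ∑ x ∈ Finset.univ.image X, ∑ y ∈ Finset.univ.image Y, ∑ z ∈ Finset.univ.image Z,
        -(jq p X Y Z x y z * Real.logb 2 (prob p (fun ω => X ω = x ∧ Z ω = z))) := by
    rw [entropy_pair_eq]
    refine Finset.sum_congr rfl fun x _ => ?_
    rw [Finset.sum_comm]
    refine Finset.sum_congr rfl fun z _ => ?_
    rw [plog_eq, neg_mul]
    simp only [Finset.sum_neg_distrib, ← Finset.sum_mul]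
    rw [← marg_xz p X Y Z x z]
  have hYZ : entropy p (fun ω => (Y ω, Z ω)) =
      ∑ x ∈ Finset.univ.image X, ∑ y ∈ Finset.univ.image Y, ∑ z ∈ Finset.univ.image Z,
        -(jq p X Y Z x y z * Real.logb 2 (prob p (fun ω => Y ω = y ∧ Z ω = z))) := by
    rw [entropy_pair_eq]
    calc ∑ y ∈ Finset.univ.image Y, ∑ z ∈ Finset.univ.image Z,
          plog (prob p (fun ω => Y ω = y ∧ Z ω = z))
        = ∑ y ∈ Finset.univ.image Y, ∑ z ∈ Finset.univ.image Z, ∑ x ∈ Finset.univ.image X,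
            -(jq p X Y Z x y z * Real.logb 2 (prob p (fun ω => Y ω = y ∧ Z ω = z))) := by
          refine Finset.sum_congr rfl fun y _ => Finset.sum_congr rfl fun z _ => ?_
          rw [plog_eq, neg_mul]
          simp only [Finset.sum_neg_distrib, ← Finset.sum_mul]
          rw [← marg_yz p X Y Z y z]
      _ = ∑ y ∈ Finset.univ.image Y, ∑ x ∈ Finset.univ.image X, ∑ z ∈ Finset.univ.image Z,
            -(jq p X Y Z x y z * Real.logb 2 (prob p (fun ω => Y ω = y ∧ Z ω = z))) := by
          exact Finset.sum_congr rfl fun y _ => Finset.sum_comm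
      _ = ∑ x ∈ Finset.univ.image X, ∑ y ∈ Finset.univ.image Y, ∑ z ∈ Finset.univ.image Z,
            -(jq p X Y Z x y z * Real.logb 2 (prob p (fun ω => Y ω = y ∧ Z ω = z))) :=
          Finset.sum_comm
  have hZ : entropy p Z =
      ∑ x ∈ Finset.univ.image X, ∑ y ∈ Finset.univ.image Y, ∑ z ∈ Finset.univ.image Z,
        -(jq p X Y Z x y z * Real.logb 2 (prob p (fun ω => Z ω = z))) := by
    unfold entropy
    calc ∑ z ∈ Finset.univ.image Z, plog (prob p (fun ω => Z ω = z))
        = ∑ z ∈ Finset.univ.image Z, ∑ x ∈ Finset.univ.image X, ∑ y ∈ Finset.univ.image Y,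
            -(jq p X Y Z x y z * Real.logb 2 (prob p (fun ω => Z ω = z))) := by
          refine Finset.sum_congr rfl fun z _ => ?_
          rw [plog_eq, neg_mul]
          simp only [Finset.sum_neg_distrib, ← Finset.sum_mul]
          rw [← marg_z p X Y Z z]
      _ = ∑ x ∈ Finset.univ.image X, ∑ z ∈ Finset.univ.image Z, ∑ y ∈ Finset.univ.image Y,
            -(jq p X Y Z x y z * Real.logb 2 (prob p (fun ω => Z ω = z))) := Finset.sum_comm
      _ = ∑ x ∈ Finset.univ.image X, ∑ y ∈ Finset.univ.image Y, ∑ z ∈ Finset.univ.image Z,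
            -(jq p X Y Z x y z * Real.logb 2 (prob p (fun ω => Z ω = z))) :=
          Finset.sum_congr rfl fun x _ => Finset.sum_comm
  have hXYZ : entropy p (fun ω => (X ω, (Y ω, Z ω))) =
      ∑ x ∈ Finset.univ.image X, ∑ y ∈ Finset.univ.image Y, ∑ z ∈ Finset.univ.image Z,
        -jq p X Y Z x y z * Real.logb 2 (jq p X Y Z x y z) := by
    rw [entropy_triple_eq]
    exact Finset.sum_congr rfl fun x _ => Finset.sum_congr rfl fun y _ =>
      Finset.sum_congr rfl fun z _ => plog_eq _
  simp only [condMutualInfo, condEntropy]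
  rw [hXZ, hYZ, hZ, hXYZ]
  simp only [← Finset.sum_sub_distrib]
  exact Finset.sum_congr rfl fun x _ => Finset.sum_congr rfl fun y _ =>
    Finset.sum_congr rfl fun z _ => by ring

lemma jq_total (hsum : ∑ ω, p ω = 1) :
    ∑ x ∈ Finset.univ.image X, ∑ y ∈ Finset.univ.image Y, ∑ z ∈ Finset.univ.image Z,
      jq p X Y Z x y z = 1 := by
  have h1 : ∀ x y, ∑ z ∈ Finset.univ.image Z, jq p X Y Z x y z =
      prob p (fun ω => X ω = x ∧ Y ω = y) := by
    intro x y
    rw [← prob_marg p (fun ω => X ω = x ∧ Y ω = y) Z]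
    exact Finset.sum_congr rfl fun z _ => prob_congr p fun ω => by tauto
  simp only [h1]
  have h2 : ∀ x, ∑ y ∈ Finset.univ.image Y, prob p (fun ω => X ω = x ∧ Y ω = y) =
      prob p (fun ω => X ω = x) :=
    fun x => prob_marg p (fun ω => X ω = x) Y
  simp only [h2]
  have h3 : ∑ x ∈ Finset.univ.image X, prob p (fun ω => X ω = x) = prob p (fun _ => True) := by
    rw [← prob_marg p (fun _ => True) X]
    exact Finset.sum_congr rfl fun x _ => prob_congr p fun ω => by tauto
  rw [h3, prob_true p hsum]

lemma w_total (hp : ∀ ω, 0 ≤ p ω) (hsum : ∑ ω, p ω = 1) :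
    ∑ x ∈ Finset.univ.image X, ∑ y ∈ Finset.univ.image Y, ∑ z ∈ Finset.univ.image Z,
      prob p (fun ω => X ω = x ∧ Z ω = z) * prob p (fun ω => Y ω = y ∧ Z ω = z) /
        prob p (fun ω => Z ω = z) = 1 := by
  have hswap : ∀ x, (∑ y ∈ Finset.univ.image Y, ∑ z ∈ Finset.univ.image Z,
      prob p (fun ω => X ω = x ∧ Z ω = z) * prob p (fun ω => Y ω = y ∧ Z ω = z) /
        prob p (fun ω => Z ω = z)) = ∑ z ∈ Finset.univ.image Z, ∑ y ∈ Finset.univ.image Y,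
      prob p (fun ω => X ω = x ∧ Z ω = z) * prob p (fun ω => Y ω = y ∧ Z ω = z) /
        prob p (fun ω => Z ω = z) := fun x => Finset.sum_comm
  simp only [hswap]
  rw [Finset.sum_comm]
  have hyz : ∀ z, ∑ y ∈ Finset.univ.image Y, prob p (fun ω => Y ω = y ∧ Z ω = z) =
      prob p (fun ω => Z ω = z) := by
    intro z
    rw [← prob_marg p (fun ω => Z ω = z) Y]
    exact Finset.sum_congr rfl fun y _ => prob_congr p fun ω => by tauto
  have hxz : ∀ z, ∑ x ∈ Finset.univ.image X, prob p (fun ω => X ω = x ∧ Z ω = z) =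
      prob p (fun ω => Z ω = z) := by
    intro z
    rw [← prob_marg p (fun ω => Z ω = z) X]
    exact Finset.sum_congr rfl fun x _ => prob_congr p fun ω => by tauto
  have hz : ∀ z ∈ Finset.univ.image Z, (∑ x ∈ Finset.univ.image X, ∑ y ∈ Finset.univ.image Y,
      prob p (fun ω => X ω = x ∧ Z ω = z) * prob p (fun ω => Y ω = y ∧ Z ω = z) /
        prob p (fun ω => Z ω = z)) = prob p (fun ω => Z ω = z) := by
    intro z _
    simp only [← Finset.sum_div, ← Finset.mul_sum, hyz z, ← Finset.sum_mul, hxz z]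
    rcases eq_or_lt_of_le (prob_nonneg p hp (fun ω => Z ω = z)) with h0 | hpos
    · rw [← h0]; simp
    · field_simp
  rw [Finset.sum_congr rfl hz]
  have h3 : ∑ z ∈ Finset.univ.image Z, prob p (fun ω => Z ω = z) = prob p (fun _ => True) := by
    rw [← prob_marg p (fun _ => True) Z]
    exact Finset.sum_congr rfl fun z _ => prob_congr p fun ω => by tauto
  rw [h3, prob_true p hsum]

lemma cmi_nonneg (hp : ∀ ω, 0 ≤ p ω) (hsum : ∑ ω, p ω = 1) :
    0 ≤ condMutualInfo p X Y Z := by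
  have hl2 : (0:ℝ) < Real.log 2 := Real.log_pos one_lt_two
  have key : ∀ x y z,
      (jq p X Y Z x y z -
        prob p (fun ω => X ω = x ∧ Z ω = z) * prob p (fun ω => Y ω = y ∧ Z ω = z) /
          prob p (fun ω => Z ω = z)) / Real.log 2 ≤
      jq p X Y Z x y z *
        (Real.logb 2 (jq p X Y Z x y z) +
         Real.logb 2 (prob p (fun ω => Z ω = z)) -
         Real.logb 2 (prob p (fun ω => X ω = x ∧ Z ω = z)) -
         Real.logb 2 (prob p (fun ω => Y ω = y ∧ Z ω = z))) := by
    intro x y z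
    set q3 := jq p X Y Z x y z with hq3def
    set qXZ := prob p (fun ω => X ω = x ∧ Z ω = z) with hqXZdef
    set qYZ := prob p (fun ω => Y ω = y ∧ Z ω = z) with hqYZdef
    set qZ := prob p (fun ω => Z ω = z) with hqZdef
    have hq3nn : 0 ≤ q3 := prob_nonneg p hp _
    have hXZnn : 0 ≤ qXZ := prob_nonneg p hp _
    have hYZnn : 0 ≤ qYZ := prob_nonneg p hp _
    have hZnn : 0 ≤ qZ := prob_nonneg p hp _
    rcases eq_or_lt_of_le hq3nn with h0 | hpos
    · rw [← h0, zero_mul]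
      have hw : 0 ≤ qXZ * qYZ / qZ := by positivity
      have : (0 - qXZ * qYZ / qZ) / Real.log 2 ≤ 0 := by
        apply div_nonpos_of_nonpos_of_nonneg <;> linarith
      linarith
    · have hXZpos : 0 < qXZ := lt_of_lt_of_le hpos
        (prob_mono p hp fun ω h => ⟨h.1, h.2.2⟩)
      have hYZpos : 0 < qYZ := lt_of_lt_of_le hpos
        (prob_mono p hp fun ω h => ⟨h.2.1, h.2.2⟩)
      have hZpos : 0 < qZ := lt_of_lt_of_le hpos
        (prob_mono p hp fun ω h => h.2.2)
      set r := qXZ * qYZ / (qZ * q3) with hrdef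
      have hrpos : 0 < r := by positivity
      have hlog : Real.log r ≤ r - 1 := Real.log_le_sub_one_of_pos hrpos
      have hL : Real.logb 2 q3 + Real.logb 2 qZ - Real.logb 2 qXZ - Real.logb 2 qYZ =
          -Real.logb 2 r := by
        rw [hrdef, Real.logb_div (by positivity) (by positivity),
          Real.logb_mul (ne_of_gt hXZpos) (ne_of_gt hYZpos),
          Real.logb_mul (ne_of_gt hZpos) (ne_of_gt hpos)]
        ring
      rw [hL]
      have hq3r : q3 * r = qXZ * qYZ / qZ := by
        rw [hrdef]
        field_simp
      have hlogb : Real.logb 2 r = Real.log r / Real.log 2 := rfl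
      rw [hlogb]
      rw [div_le_iff₀ hl2]
      have h2 : q3 * -(Real.log r / Real.log 2) * Real.log 2 = -(q3 * Real.log r) := by
        field_simp
      rw [h2]
      have h1 : q3 * Real.log r ≤ q3 * (r - 1) :=
        mul_le_mul_of_nonneg_left hlog hq3nn
      have h1' : q3 * Real.log r ≤ q3 * r - q3 := by nlinarith [h1]
      linarith [h1', hq3r.le, hq3r.ge]
  rw [cmi_repr]
  have step : ∀ x ∈ Finset.univ.image X, ∀ y ∈ Finset.univ.image Y,
      True := fun _ _ _ _ => trivial
  have hge : ∑ x ∈ Finset.univ.image X, ∑ y ∈ Finset.univ.image Y, ∑ z ∈ Finset.univ.image Z,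
      ((jq p X Y Z x y z -
        prob p (fun ω => X ω = x ∧ Z ω = z) * prob p (fun ω => Y ω = y ∧ Z ω = z) /
          prob p (fun ω => Z ω = z)) / Real.log 2) ≤
      ∑ x ∈ Finset.univ.image X, ∑ y ∈ Finset.univ.image Y, ∑ z ∈ Finset.univ.image Z,
      jq p X Y Z x y z *
        (Real.logb 2 (jq p X Y Z x y z) +
         Real.logb 2 (prob p (fun ω => Z ω = z)) -
         Real.logb 2 (prob p (fun ω => X ω = x ∧ Z ω = z)) -
         Real.logb 2 (prob p (fun ω => Y ω = y ∧ Z ω = z))) := by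
    refine Finset.sum_le_sum fun x _ => Finset.sum_le_sum fun y _ =>
      Finset.sum_le_sum fun z _ => key x y z
  refine le_trans (le_of_eq ?_) hge
  simp only [sub_div, Finset.sum_sub_distrib, ← Finset.sum_div]
  rw [jq_total p X Y Z hsum, w_total p X Y Z hp hsum]
  simp

lemma cmi_eq_zero (hp : ∀ ω, 0 ≤ p ω)
    (hCI : ∀ x y z,
      prob p (fun ω => X ω = x ∧ Y ω = y ∧ Z ω = z) * prob p (fun ω => Z ω = z) =
        prob p (fun ω => X ω = x ∧ Z ω = z) * prob p (fun ω => Y ω = y ∧ Z ω = z)) :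
    condMutualInfo p X Y Z = 0 := by
  rw [cmi_repr]
  refine Finset.sum_eq_zero fun x _ => Finset.sum_eq_zero fun y _ =>
    Finset.sum_eq_zero fun z _ => ?_
  set q3 := jq p X Y Z x y z with hq3def
  set qXZ := prob p (fun ω => X ω = x ∧ Z ω = z) with hqXZdef
  set qYZ := prob p (fun ω => Y ω = y ∧ Z ω = z) with hqYZdef
  set qZ := prob p (fun ω => Z ω = z) with hqZdef
  have hci : q3 * qZ = qXZ * qYZ := hCI x y z
  rcases eq_or_lt_of_le (prob_nonneg p hp
      (fun ω => X ω = x ∧ Y ω = y ∧ Z ω = z)) with h0 | hpos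
  · rw [hq3def, jq, ← h0, zero_mul]
  · have hpos' : 0 < q3 := hpos
    have hZpos : 0 < qZ := lt_of_lt_of_le hpos' (prob_mono p hp fun ω h => h.2.2)
    have hXZnn : 0 ≤ qXZ := prob_nonneg p hp _
    have hYZnn : 0 ≤ qYZ := prob_nonneg p hp _
    have hprod : 0 < qXZ * qYZ := by rw [← hci]; positivity
    have hXZpos : 0 < qXZ := by
      rcases lt_or_eq_of_le hXZnn with h | h
      · exact h
      · rw [← h] at hprod; simp at hprod
    have hYZpos : 0 < qYZ := by
      rcases lt_or_eq_of_le hYZnn with h | h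
      · exact h
      · rw [← h] at hprod; simp at hprod
    have hlog : Real.logb 2 q3 + Real.logb 2 qZ = Real.logb 2 qXZ + Real.logb 2 qYZ := by
      rw [← Real.logb_mul (ne_of_gt hpos') (ne_of_gt hZpos),
        ← Real.logb_mul (ne_of_gt hXZpos) (ne_of_gt hYZpos), hci]
    have : Real.logb 2 q3 + Real.logb 2 qZ - Real.logb 2 qXZ - Real.logb 2 qYZ = 0 := by
      linarith
    rw [this, mul_zero]

end CMI

section Hist

lemma hist_succ_iff {Ω α : Type} (X : ℕ → Ω → α) (t : ℕ) (ω ω' : Ω) :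
    hist X (t + 1) ω = hist X (t + 1) ω' ↔
      (hist X t ω = hist X t ω' ∧ X t ω = X t ω') := by
  constructor
  · intro h
    refine ⟨funext fun i => ?_, ?_⟩
    · exact congrFun h i.castSucc
    · exact congrFun h (Fin.last t)
  · rintro ⟨h1, h2⟩
    funext i
    rcases lt_or_eq_of_le (Nat.lt_succ_iff.mp i.isLt) with hlt | heq
    · exact congrFun h1 ⟨i.val, hlt⟩
    · show X i.val ω = X i.val ω'
      rw [heq]
      exact h2

lemma hist_zero_eq {Ω α : Type} (X : ℕ → Ω → α) (ω ω' : Ω) :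
    hist X 0 ω = hist X 0 ω' := funext fun i => i.elim0

end Hist

lemma cmi_expand {Ω α β γ : Type} [Fintype Ω] (p : Ω → ℝ)
    (X : Ω → α) (Y : Ω → β) (Z : Ω → γ) :
    condMutualInfo p X Y Z =
      entropy p (fun ω => (X ω, Z ω)) - entropy p Z -
        (entropy p (fun ω => (X ω, (Y ω, Z ω))) - entropy p (fun ω => (Y ω, Z ω))) := by
  simp only [condMutualInfo, condEntropy]

lemma step_identity {Ω α β γ δ : Type} [Fintype Ω]
    (p : Ω → ℝ) (hp : ∀ ω, 0 ≤ p ω) (t : ℕ)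
    (X : ℕ → Ω → α) (A : ℕ → Ω → β) (D : ℕ → Ω → γ) (U : ℕ → Ω → δ)
    (hDt : ∀ (d : γ) (v : (Fin t → β) × (Fin t → γ) × (Fin t → δ) × (Fin (t + 1) → α)),
      prob p (fun ω => D t ω = d ∧ (hist A t ω, hist D t ω, hist U t ω, hist X (t + 1) ω) = v) =
        prob p (fun ω => D t ω = d) *
          prob p (fun ω => (hist A t ω, hist D t ω, hist U t ω, hist X (t + 1) ω) = v))
    (hUt : ∀ (x : Fin (t + 1) → α) (v : δ)
        (z : (Fin (t + 1) → β) × (Fin (t + 1) → γ) × (Fin t → δ)),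
      prob p (fun ω => hist X (t + 1) ω = x ∧ U t ω = v ∧
            (hist A (t + 1) ω, hist D (t + 1) ω, hist U t ω) = z) *
          prob p (fun ω => (hist A (t + 1) ω, hist D (t + 1) ω, hist U t ω) = z) =
        prob p (fun ω => hist X (t + 1) ω = x ∧
            (hist A (t + 1) ω, hist D (t + 1) ω, hist U t ω) = z) *
          prob p (fun ω => U t ω = v ∧ (hist A (t + 1) ω, hist D (t + 1) ω, hist U t ω) = z))
    (hXt : ∀ (v : (Fin t → β) × (Fin t → γ)) (x : α) (z : (Fin t → α) × (Fin t → δ)),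
      prob p (fun ω => (hist A t ω, hist D t ω) = v ∧ X t ω = x ∧ (hist X t ω, hist U t ω) = z) *
          prob p (fun ω => (hist X t ω, hist U t ω) = z) =
        prob p (fun ω => (hist A t ω, hist D t ω) = v ∧ (hist X t ω, hist U t ω) = z) *
          prob p (fun ω => X t ω = x ∧ (hist X t ω, hist U t ω) = z)) :
    condMutualInfo p (hist X (t + 1)) (A t)
        (fun ω => (hist A t ω, hist D (t + 1) ω, hist U t ω)) =
      condMutualInfo p (hist X (t + 1)) (U t) (hist U t) +
        (condMutualInfo p (hist X (t + 1))
            (fun ω => (hist A (t + 1) ω, hist D (t + 1) ω)) (hist U (t + 1)) -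
          condMutualInfo p (hist X t)
            (fun ω => (hist A t ω, hist D t ω)) (hist U t)) := by
  -- conditional independence facts
  have hjoint : ∀ (x : Fin (t + 1) → α) (d : γ) (za : Fin t → β) (zd : Fin t → γ)
      (zu : Fin t → δ),
      prob p (fun ω => hist X (t + 1) ω = x ∧ D t ω = d ∧
          (hist A t ω, hist D t ω, hist U t ω) = (za, zd, zu)) =
        prob p (fun ω => D t ω = d) *
          prob p (fun ω => hist X (t + 1) ω = x ∧
            (hist A t ω, hist D t ω, hist U t ω) = (za, zd, zu)) := by
    intro x d za zd zu
    rw [prob_congr p (F := fun ω => D t ω = d ∧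
        (hist A t ω, hist D t ω, hist U t ω, hist X (t + 1) ω) = (za, zd, zu, x))
      (fun ω => by simp only [Prod.mk.injEq]; tauto)]
    rw [hDt d (za, zd, zu, x)]
    congr 1
    exact prob_congr p fun ω => by simp only [Prod.mk.injEq]; tauto
  have hmargD : ∀ (d : γ) (za : Fin t → β) (zd : Fin t → γ) (zu : Fin t → δ),
      prob p (fun ω => D t ω = d ∧ (hist A t ω, hist D t ω, hist U t ω) = (za, zd, zu)) =
        prob p (fun ω => D t ω = d) *
          prob p (fun ω => (hist A t ω, hist D t ω, hist U t ω) = (za, zd, zu)) := by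
    intro d za zd zu
    rw [← prob_marg p (fun ω => D t ω = d ∧
        (hist A t ω, hist D t ω, hist U t ω) = (za, zd, zu)) (hist X (t + 1))]
    have h1 : ∀ x : Fin (t + 1) → α,
        prob p (fun ω => (D t ω = d ∧
            (hist A t ω, hist D t ω, hist U t ω) = (za, zd, zu)) ∧ hist X (t + 1) ω = x) =
          prob p (fun ω => D t ω = d) *
            prob p (fun ω => hist X (t + 1) ω = x ∧
              (hist A t ω, hist D t ω, hist U t ω) = (za, zd, zu)) := by
      intro x
      rw [prob_congr p (F := fun ω => hist X (t + 1) ω = x ∧ D t ω = d ∧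
          (hist A t ω, hist D t ω, hist U t ω) = (za, zd, zu)) (fun ω => by tauto)]
      exact hjoint x d za zd zu
    simp only [h1]
    rw [← Finset.mul_sum]
    congr 1
    rw [← prob_marg p (fun ω =>
        (hist A t ω, hist D t ω, hist U t ω) = (za, zd, zu)) (hist X (t + 1))]
    exact Finset.sum_congr rfl fun x _ => prob_congr p fun ω => by tauto
  have E1 : condMutualInfo p (hist X (t + 1)) (D t)
      (fun ω => (hist A t ω, hist D t ω, hist U t ω)) = 0 := by
    refine cmi_eq_zero p _ _ _ hp fun x d z => ?_
    obtain ⟨za, zd, zu⟩ := z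
    rw [hjoint x d za zd zu, hmargD d za zd zu]
    ring
  have E2 : condMutualInfo p (hist X (t + 1)) (U t)
      (fun ω => (hist A (t + 1) ω, hist D (t + 1) ω, hist U t ω)) = 0 :=
    cmi_eq_zero p _ _ _ hp fun x v z => hUt x v z
  have E3 : condMutualInfo p (fun ω => (hist A t ω, hist D t ω)) (X t)
      (fun ω => (hist X t ω, hist U t ω)) = 0 :=
    cmi_eq_zero p _ _ _ hp fun v x z => hXt v x z
  rw [cmi_expand] at E1 E2 E3 ⊢
  rw [cmi_expand p (hist X (t + 1)) (U t) (hist U t)]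
  rw [cmi_expand p (hist X (t + 1)) _ (hist U (t + 1))]
  rw [cmi_expand p (hist X t) _ (hist U t)]
  -- partition identifications
  have P1 : entropy p (fun ω => (hist X (t + 1) ω,
        (hist A t ω, hist D (t + 1) ω, hist U t ω))) =
      entropy p (fun ω => (hist X (t + 1) ω,
        (D t ω, (hist A t ω, hist D t ω, hist U t ω)))) :=
    entropy_partition p _ _ fun ω ω' => by
      simp only [Prod.mk.injEq, hist_succ_iff]; tauto
  have P2 : entropy p (fun ω => (hist A t ω, hist D (t + 1) ω, hist U t ω)) =
      entropy p (fun ω => (D t ω, (hist A t ω, hist D t ω, hist U t ω))) :=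
    entropy_partition p _ _ fun ω ω' => by
      simp only [Prod.mk.injEq, hist_succ_iff]; tauto
  have P3 : entropy p (fun ω => (hist X (t + 1) ω,
        (A t ω, (hist A t ω, hist D (t + 1) ω, hist U t ω)))) =
      entropy p (fun ω => (hist X (t + 1) ω,
        (hist A (t + 1) ω, hist D (t + 1) ω, hist U t ω))) :=
    entropy_partition p _ _ fun ω ω' => by
      simp only [Prod.mk.injEq, hist_succ_iff]; tauto
  have P4 : entropy p (fun ω => (A t ω, (hist A t ω, hist D (t + 1) ω, hist U t ω))) =
      entropy p (fun ω => (hist A (t + 1) ω, hist D (t + 1) ω, hist U t ω)) :=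
    entropy_partition p _ _ fun ω ω' => by
      simp only [Prod.mk.injEq, hist_succ_iff]; tauto
  have P5 : entropy p (fun ω => (hist X (t + 1) ω, (U t ω, hist U t ω))) =
      entropy p (fun ω => (hist X (t + 1) ω, hist U (t + 1) ω)) :=
    entropy_partition p _ _ fun ω ω' => by
      simp only [Prod.mk.injEq, hist_succ_iff]; tauto
  have P6 : entropy p (fun ω => (U t ω, hist U t ω)) =
      entropy p (hist U (t + 1)) :=
    entropy_partition p _ _ fun ω ω' => by
      simp only [Prod.mk.injEq, hist_succ_iff]; tauto
  have P7 : entropy p (fun ω => (hist X (t + 1) ω,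
        ((hist A (t + 1) ω, hist D (t + 1) ω), hist U (t + 1) ω))) =
      entropy p (fun ω => (hist X (t + 1) ω,
        (U t ω, (hist A (t + 1) ω, hist D (t + 1) ω, hist U t ω)))) :=
    entropy_partition p _ _ fun ω ω' => by
      simp only [Prod.mk.injEq, hist_succ_iff]; tauto
  have P8 : entropy p (fun ω => ((hist A (t + 1) ω, hist D (t + 1) ω), hist U (t + 1) ω)) =
      entropy p (fun ω => (U t ω, (hist A (t + 1) ω, hist D (t + 1) ω, hist U t ω))) :=
    entropy_partition p _ _ fun ω ω' => by
      simp only [Prod.mk.injEq, hist_succ_iff]; tauto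
  have P9 : entropy p (fun ω => (hist X t ω, ((hist A t ω, hist D t ω), hist U t ω))) =
      entropy p (fun ω => ((hist A t ω, hist D t ω), (hist X t ω, hist U t ω))) :=
    entropy_partition p _ _ fun ω ω' => by
      simp only [Prod.mk.injEq]; tauto
  have P10 : entropy p (fun ω => (hist X (t + 1) ω,
        (hist A t ω, hist D t ω, hist U t ω))) =
      entropy p (fun ω => ((hist A t ω, hist D t ω),
        (X t ω, (hist X t ω, hist U t ω)))) :=
    entropy_partition p _ _ fun ω ω' => by
      simp only [Prod.mk.injEq, hist_succ_iff]; tauto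
  have P11 : entropy p (fun ω => (X t ω, (hist X t ω, hist U t ω))) =
      entropy p (fun ω => (hist X (t + 1) ω, hist U t ω)) :=
    entropy_partition p _ _ fun ω ω' => by
      simp only [Prod.mk.injEq, hist_succ_iff]; tauto
  have P12 : entropy p (fun ω => (hist A t ω, hist D t ω, hist U t ω)) =
      entropy p (fun ω => ((hist A t ω, hist D t ω), hist U t ω)) :=
    entropy_partition p _ _ fun ω ω' => by
      simp only [Prod.mk.injEq]; tauto
  linarith [E1, E2, E3, P1, P2, P3, P4, P5, P6, P7, P8, P9, P10, P11, P12]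


/-- Directed-information data processing inequality:
`I(X^T → A^T ‖ D^T, U₊^{T-1}) ≥ I(X^T → U^T)`. -/
theorem directed_info_DPI {Ω α β γ δ : Type} [Fintype Ω]
    (p : Ω → ℝ) (hp : ∀ ω, 0 ≤ p ω) (hsum : ∑ ω, p ω = 1) (T : ℕ)
    (X : ℕ → Ω → α) (A : ℕ → Ω → β) (D : ℕ → Ω → γ) (U : ℕ → Ω → δ)
(hD : ∀ t : ℕ, ∀ (d : γ) (v : (Fin t → β) × (Fin t → γ) × (Fin t → δ) × (Fin (t + 1) → α)),
      prob p (fun ω => D t ω = d ∧ (hist A t ω, hist D t ω, hist U t ω, hist X (t + 1) ω) = v) =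
        prob p (fun ω => D t ω = d) *
          prob p (fun ω => (hist A t ω, hist D t ω, hist U t ω, hist X (t + 1) ω) = v))
    (hU : ∀ t : ℕ, ∀ (x : Fin (t + 1) → α) (v : δ)
        (z : (Fin (t + 1) → β) × (Fin (t + 1) → γ) × (Fin t → δ)),
      prob p (fun ω => hist X (t + 1) ω = x ∧ U t ω = v ∧
            (hist A (t + 1) ω, hist D (t + 1) ω, hist U t ω) = z) *
          prob p (fun ω => (hist A (t + 1) ω, hist D (t + 1) ω, hist U t ω) = z) =
        prob p (fun ω => hist X (t + 1) ω = x ∧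
            (hist A (t + 1) ω, hist D (t + 1) ω, hist U t ω) = z) *
          prob p (fun ω => U t ω = v ∧ (hist A (t + 1) ω, hist D (t + 1) ω, hist U t ω) = z))
    (hX : ∀ t : ℕ, ∀ (v : (Fin t → β) × (Fin t → γ)) (x : α) (z : (Fin t → α) × (Fin t → δ)),
      prob p (fun ω => (hist A t ω, hist D t ω) = v ∧ X t ω = x ∧ (hist X t ω, hist U t ω) = z) *
          prob p (fun ω => (hist X t ω, hist U t ω) = z) =
        prob p (fun ω => (hist A t ω, hist D t ω) = v ∧ (hist X t ω, hist U t ω) = z) *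
          prob p (fun ω => X t ω = x ∧ (hist X t ω, hist U t ω) = z)) :
    ∑ t ∈ Finset.range (T + 1),
        condMutualInfo p (hist X (t + 1)) (A t)
          (fun ω => (hist A t ω, hist D (t + 1) ω, hist U t ω)) ≥
      ∑ t ∈ Finset.range (T + 1),
        condMutualInfo p (hist X (t + 1)) (U t) (hist U t) := by
  set Δ : ℕ → ℝ := fun s =>
    condMutualInfo p (hist X s) (fun ω => (hist A s ω, hist D s ω)) (hist U s) with hΔ
  have hstep : ∀ t : ℕ,
      condMutualInfo p (hist X (t + 1)) (A t)
          (fun ω => (hist A t ω, hist D (t + 1) ω, hist U t ω)) =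
        condMutualInfo p (hist X (t + 1)) (U t) (hist U t) + (Δ (t + 1) - Δ t) :=
    fun t => step_identity p hp t X A D U (hD t) (hU t) (hX t)
  rw [Finset.sum_congr rfl fun t _ => hstep t]
  rw [Finset.sum_add_distrib, Finset.sum_range_sub (f := Δ)]
  have hΔ0 : Δ 0 = 0 := by
    show condMutualInfo p (hist X 0) (fun ω => (hist A 0 ω, hist D 0 ω)) (hist U 0) = 0
    rw [cmi_expand]
    have h1 : entropy p (fun ω => (hist X 0 ω, hist U 0 ω)) = 0 :=
      entropy_const p hsum _ fun ω ω' => by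
        rw [hist_zero_eq X ω ω', hist_zero_eq U ω ω']
    have h2 : entropy p (hist U 0) = 0 :=
      entropy_const p hsum _ fun ω ω' => hist_zero_eq U ω ω'
    have h3 : entropy p (fun ω => (hist X 0 ω,
        ((hist A 0 ω, hist D 0 ω), hist U 0 ω))) = 0 :=
      entropy_const p hsum _ fun ω ω' => by
        rw [hist_zero_eq X ω ω', hist_zero_eq A ω ω', hist_zero_eq D ω ω',
          hist_zero_eq U ω ω']
    have h4 : entropy p (fun ω => ((hist A 0 ω, hist D 0 ω), hist U 0 ω)) = 0 :=
      entropy_const p hsum _ fun ω ω' => by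
        rw [hist_zero_eq A ω ω', hist_zero_eq D ω ω', hist_zero_eq U ω ω']
    rw [h1, h2, h3, h4]
    ring
  have hΔT : 0 ≤ Δ (T + 1) := cmi_nonneg p _ _ _ hp hsum
  rw [hΔ0, sub_zero, ge_iff_le]
  linarith
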